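/- arXiv:2505.22325 — 5 statements merged into one kernel-verified Lean document; each statement's English description precedes it below -/
import Mathlib

section
/- Let p ∈ [1,∞] with conjugate exponent p'. For every signal f : V → X, the graph Fourier transform satisfies ‖f̂‖_∞ ≤ κ_{p'}(U)·‖f‖_p and ‖f‖_∞ ≤ κ_{p'}(U*)·‖f̂‖_p. Moreover, if X is nontrivial, the first bound is sharp: the operator norm of 𝓕 : L^p(V,X) → L^∞(V,X) equals κ_{p'}(U), i.e., sup over nonzero f of ‖f̂‖_∞/‖f‖_p equals κ_{p'}(U). -/
/-!
Each coefficient `f̂ k` is the pairing of `f` with the column `u k`, so Hölder's inequality bounds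
it by `‖u k‖_{p'} ‖f‖_p`. Orthonormal columns make `U` unitary, hence `U* U = 1` as well, so `f` is
the transform of `f̂` with respect to `U*`, whose columns are the rows of `U`; this gives the
second bound. For sharpness, take a column `u k` of maximal `p'`-norm and a nonzero `x : X`, and
let `f n = c n • x` where `c` is the extremal signal of Hölder's inequality against `u k`:
`c n = ‖u k n‖ ^ (p' - 1) * phase (u k n)`, or a point mass at a largest entry when `p' = ∞`.
-/

open Finset
open scoped ENNReal

/-- The `L^p` norm of a signal `f : Fin N → E` (sup-norm when `p = ∞`). -/
noncomputable def gsNorm {E : Type*} [NormedAddCommGroup E] {N : ℕ} (p : ℝ≥0∞)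
    (f : Fin N → E) : ℝ :=
  if p = ∞ then ⨆ n, ‖f n‖ else (∑ n, ‖f n‖ ^ p.toReal) ^ (1 / p.toReal)

/-- `u k` is the `k`-th column of a unitary matrix, i.e. the family of columns is
orthonormal for the standard inner product on `𝕂^N` (hence an orthonormal basis). -/
def OrthoBasis {𝕂 : Type*} [RCLike 𝕂] {N : ℕ} (u : Fin N → Fin N → 𝕂) : Prop :=
  ∀ k l : Fin N, ∑ n, (starRingEnd 𝕂) (u k n) * u l n = if k = l then (1 : 𝕂) else 0

/-- Graph Fourier transform: `f̂ k = ∑ n, conj (u k n) • f n`. -/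
noncomputable def gft {𝕂 : Type*} [RCLike 𝕂] {X : Type*} [NormedAddCommGroup X]
    [NormedSpace 𝕂 X] {N : ℕ} (u : Fin N → Fin N → 𝕂) (f : Fin N → X) : Fin N → X :=
  fun k => ∑ n, (starRingEnd 𝕂) (u k n) • f n

/-- `p`-coherence `κ_p(U)`: the maximum of the `ℓ^p` norms of the columns of `U`. -/
noncomputable def coh {𝕂 : Type*} [RCLike 𝕂] {N : ℕ} (p : ℝ≥0∞)
    (u : Fin N → Fin N → 𝕂) : ℝ :=
  ⨆ k, gsNorm p (u k)

/-- Mixed norm `‖U‖_{p,q}`: the `ℓ^q` norm of the vector of `ℓ^p` norms of the columns. -/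
noncomputable def mixNorm {𝕂 : Type*} [RCLike 𝕂] {N : ℕ} (p q : ℝ≥0∞)
    (u : Fin N → Fin N → 𝕂) : ℝ :=
  gsNorm q (fun k => gsNorm p (u k))

/-- Graph convolution of a scalar signal `α` with a signal `f`:
`(α*f)(n) = ∑ k, u k n • (α̂ k • f̂ k)`. -/
noncomputable def gconv {𝕂 : Type*} [RCLike 𝕂] {X : Type*} [NormedAddCommGroup X]
    [NormedSpace 𝕂 X] {N : ℕ} (u : Fin N → Fin N → 𝕂) (α : Fin N → 𝕂)
    (f : Fin N → X) : Fin N → X :=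
  fun n => ∑ k, u k n • (gft u α k • gft u f k)

/-- Graph translation operator `T_m f (n) = ∑ k, (u k n * conj (u k m)) • f̂ k`. -/
noncomputable def gtrans {𝕂 : Type*} [RCLike 𝕂] {X : Type*} [NormedAddCommGroup X]
    [NormedSpace 𝕂 X] {N : ℕ} (u : Fin N → Fin N → 𝕂) (m : Fin N)
    (f : Fin N → X) : Fin N → X :=
  fun n => ∑ k, (u k n * (starRingEnd 𝕂) (u k m)) • gft u f k

open scoped Matrix ComplexConjugate

section gsNorm

variable {E F : Type*} [NormedAddCommGroup E] [NormedAddCommGroup F] {N : ℕ}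

lemma gsNorm_top (f : Fin N → E) : gsNorm ∞ f = ⨆ n, ‖f n‖ := if_pos rfl

lemma gsNorm_of_ne_top {p : ℝ≥0∞} (hp : p ≠ ∞) (f : Fin N → E) :
    gsNorm p f = (∑ n, ‖f n‖ ^ p.toReal) ^ (1 / p.toReal) := if_neg hp

lemma gsNorm_one (f : Fin N → E) : gsNorm 1 f = ∑ n, ‖f n‖ := by
  simp [gsNorm_of_ne_top]

lemma gsNorm_congr_norm {p : ℝ≥0∞} {f : Fin N → E} {g : Fin N → F} (h : ∀ n, ‖f n‖ = ‖g n‖) :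
    gsNorm p f = gsNorm p g := by
  simp only [gsNorm, h]

lemma gsNorm_nonneg (p : ℝ≥0∞) (f : Fin N → E) : 0 ≤ gsNorm p f := by
  by_cases hp : p = ∞
  · rw [hp, gsNorm_top]
    exact Real.iSup_nonneg fun n => norm_nonneg _
  · rw [gsNorm_of_ne_top hp]
    positivity

lemma norm_le_gsNorm_top (f : Fin N → E) (n : Fin N) : ‖f n‖ ≤ gsNorm ∞ f := by
  rw [gsNorm_top]
  exact le_ciSup (Set.finite_range fun n => ‖f n‖).bddAbove n

lemma gsNorm_top_le {f : Fin N → E} {c : ℝ} (hf : ∀ n, ‖f n‖ ≤ c) (hc : 0 ≤ c) :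
    gsNorm ∞ f ≤ c := by
  rw [gsNorm_top]
  exact Real.iSup_le (f := fun n => ‖f n‖) hf hc

lemma gsNorm_top_eq_norm {f : Fin N → E} {n₀ : Fin N} (h : ∀ n, ‖f n‖ ≤ ‖f n₀‖) :
    gsNorm ∞ f = ‖f n₀‖ :=
  (gsNorm_top_le h (norm_nonneg _)).antisymm (norm_le_gsNorm_top f n₀)

lemma gsNorm_smul {𝕜 : Type*} [NormedField 𝕜] [NormedSpace 𝕜 E] {p : ℝ≥0∞} (hp : p ≠ 0)
    (a : 𝕜) (f : Fin N → E) : gsNorm p (a • f) = ‖a‖ * gsNorm p f := by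
  by_cases hp_top : p = ∞
  · simp only [hp_top, gsNorm_top, Pi.smul_apply, norm_smul]
    exact (Real.mul_iSup_of_nonneg (norm_nonneg a) _).symm
  have hr : 0 < p.toReal := ENNReal.toReal_pos hp hp_top
  simp only [gsNorm_of_ne_top hp_top, Pi.smul_apply, norm_smul,
    Real.mul_rpow (norm_nonneg _) (norm_nonneg _), ← mul_sum]
  rw [Real.mul_rpow (by positivity) (by positivity), ← Real.rpow_mul (norm_nonneg _),
    mul_one_div_cancel hr.ne', Real.rpow_one]

end gsNorm

section Holder

variable {E F : Type*} [NormedAddCommGroup E] [NormedAddCommGroup F] {N : ℕ}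

lemma sum_norm_mul_norm_le_gsNorm_top_mul_gsNorm_one (f : Fin N → E) (g : Fin N → F) :
    ∑ n, ‖f n‖ * ‖g n‖ ≤ gsNorm ∞ f * gsNorm 1 g := by
  rw [gsNorm_one, mul_sum]
  gcongr with n
  exact norm_le_gsNorm_top f n

lemma sum_norm_mul_norm_le_gsNorm_mul_gsNorm (p q : ℝ≥0∞) [p.HolderConjugate q]
    (f : Fin N → E) (g : Fin N → F) :
    ∑ n, ‖f n‖ * ‖g n‖ ≤ gsNorm p f * gsNorm q g := by
  by_cases hp : p = ∞
  · obtain rfl : q = 1 := (ENNReal.HolderConjugate.eq_top_iff_eq_one p q).mp hp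
    subst hp
    exact sum_norm_mul_norm_le_gsNorm_top_mul_gsNorm_one f g
  by_cases hq : q = ∞
  · obtain rfl : p = 1 := (ENNReal.HolderConjugate.eq_top_iff_eq_one q p).mp hq
    subst hq
    simpa only [mul_comm] using sum_norm_mul_norm_le_gsNorm_top_mul_gsNorm_one g f
  rw [gsNorm_of_ne_top hp, gsNorm_of_ne_top hq]
  exact Real.inner_le_Lp_mul_Lq_of_nonneg univ
    (ENNReal.HolderConjugate.toReal_of_ne_top hp hq)
    (fun n _ => norm_nonneg _) (fun n _ => norm_nonneg _)

lemma exists_sum_norm_mul_eq_gsNorm_mul_gsNorm (p q : ℝ≥0∞) [p.HolderConjugate q]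
    {f : Fin N → E} (hf : f ≠ 0) :
    ∃ b : Fin N → ℝ, (∀ n, 0 ≤ b n) ∧ b ≠ 0 ∧ ∑ n, ‖f n‖ * b n = gsNorm p f * gsNorm q b := by
  obtain ⟨n₁, hn₁⟩ := Function.ne_iff.mp hf
  by_cases hp : p = ∞
  · obtain rfl : q = 1 := (ENNReal.HolderConjugate.eq_top_iff_eq_one p q).mp hp
    subst hp
    have : Nonempty (Fin N) := ⟨n₁⟩
    obtain ⟨n₀, hn₀⟩ := Finite.exists_max fun n => ‖f n‖
    refine ⟨Pi.single n₀ 1, fun n => ?_, by simp, ?_⟩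
    · by_cases h : n = n₀ <;> simp [h]
    · rw [gsNorm_top_eq_norm hn₀, gsNorm_one]
      simp [Pi.single_apply, apply_ite]
  by_cases hp1 : p = 1
  · obtain rfl : q = ∞ := ((ENNReal.HolderConjugate.eq_top_iff_eq_one q p).mpr hp1)
    subst hp1
    refine ⟨fun _ => 1, fun _ => zero_le_one, Function.ne_iff.mpr ⟨n₁, one_ne_zero⟩, ?_⟩
    rw [gsNorm_one, gsNorm_top_eq_norm (n₀ := n₁) fun n => le_rfl]
    simp
  have hq : q ≠ ∞ := (ENNReal.HolderConjugate.ne_top_iff_ne_one q p).mpr hp1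
  have hpq := ENNReal.HolderConjugate.toReal_of_ne_top hp hq
  have hpos : 0 < ‖f n₁‖ ^ (p.toReal - 1) := Real.rpow_pos_of_pos (norm_pos_iff.mpr hn₁) _
  refine ⟨fun n => ‖f n‖ ^ (p.toReal - 1), fun n => by positivity,
    Function.ne_iff.mpr ⟨n₁, hpos.ne'⟩, ?_⟩
  have hmul : ∀ n, ‖f n‖ * ‖f n‖ ^ (p.toReal - 1) = ‖f n‖ ^ p.toReal := fun n => by
    rw [← Real.rpow_one_add' (norm_nonneg _) (by simp [hpq.ne_zero]), add_sub_cancel]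
  have hpow : ∀ n, ‖‖f n‖ ^ (p.toReal - 1)‖ ^ q.toReal = ‖f n‖ ^ p.toReal := fun n => by
    rw [Real.norm_of_nonneg (by positivity), ← Real.rpow_mul (norm_nonneg _),
      hpq.sub_one_mul_conj]
  have hT : 0 < ∑ n, ‖f n‖ ^ p.toReal := sum_pos' (fun n _ => by positivity)
    ⟨n₁, mem_univ _, Real.rpow_pos_of_pos (norm_pos_iff.mpr hn₁) _⟩
  rw [gsNorm_of_ne_top hp, gsNorm_of_ne_top hq]
  simp only [hmul, hpow]
  rw [← Real.rpow_add hT, hpq.one_div_add_one_div, div_one, Real.rpow_one]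

end Holder

section Phase

variable {𝕂 : Type*} [RCLike 𝕂]

noncomputable def phase (z : 𝕂) : 𝕂 := if z = 0 then 1 else z / ‖z‖

lemma norm_phase (z : 𝕂) : ‖phase z‖ = 1 := by
  by_cases hz : z = 0
  · simp [phase, hz]
  · simp [phase, hz, norm_div]

lemma conj_mul_phase (z : 𝕂) : conj z * phase z = ‖z‖ := by
  by_cases hz : z = 0
  · simp [phase, hz]
  · rw [phase, if_neg hz, mul_div_assoc', RCLike.conj_mul, sq, mul_div_assoc,
      div_self (RCLike.ofReal_ne_zero.mpr (norm_ne_zero_iff.mpr hz)), mul_one]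

lemma exists_sum_conj_mul_eq_gsNorm_mul_gsNorm {N : ℕ} (p q : ℝ≥0∞) [p.HolderConjugate q]
    {w : Fin N → 𝕂} (hw : w ≠ 0) :
    ∃ c : Fin N → 𝕂, c ≠ 0 ∧ ∑ n, conj (w n) * c n = ((gsNorm p w * gsNorm q c : ℝ) : 𝕂) := by
  obtain ⟨b, hb_nonneg, hb, hsum⟩ := exists_sum_norm_mul_eq_gsNorm_mul_gsNorm p q hw
  have hnorm : ∀ n, ‖(b n : 𝕂) * phase (w n)‖ = ‖b n‖ := fun n => by
    rw [norm_mul, norm_phase, mul_one, RCLike.norm_ofReal, Real.norm_eq_abs]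
  refine ⟨fun n => b n * phase (w n), fun hc => hb ?_, ?_⟩
  · funext n
    simpa [hnorm] using congrArg norm (congrFun hc n)
  · rw [gsNorm_congr_norm hnorm, ← hsum]
    push_cast
    refine sum_congr rfl fun n _ => ?_
    rw [mul_left_comm, conj_mul_phase, mul_comm]

end Phase

section GFT

variable {𝕂 : Type*} [RCLike 𝕂] {X : Type*} [NormedAddCommGroup X] [NormedSpace 𝕂 X] {N : ℕ}

lemma coh_nonneg (p : ℝ≥0∞) (u : Fin N → Fin N → 𝕂) : 0 ≤ coh p u :=
  Real.iSup_nonneg fun k => gsNorm_nonneg p (u k)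

lemma gsNorm_le_coh (p : ℝ≥0∞) (u : Fin N → Fin N → 𝕂) (k : Fin N) : gsNorm p (u k) ≤ coh p u :=
  le_ciSup (Set.finite_range fun k => gsNorm p (u k)).bddAbove k

lemma exists_coh_eq [NeZero N] (p : ℝ≥0∞) (u : Fin N → Fin N → 𝕂) :
    ∃ k, coh p u = gsNorm p (u k) := by
  obtain ⟨k, hk⟩ := Finite.exists_max fun k => gsNorm p (u k)
  exact ⟨k, (ciSup_le hk).antisymm (gsNorm_le_coh p u k)⟩

lemma norm_gft_le (p q : ℝ≥0∞) [p.HolderConjugate q] (u : Fin N → Fin N → 𝕂)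
    (f : Fin N → X) (k : Fin N) : ‖gft u f k‖ ≤ gsNorm q (u k) * gsNorm p f :=
  calc ‖gft u f k‖ ≤ ∑ n, ‖u k n‖ * ‖f n‖ :=
        norm_sum_le_of_le _ fun n _ => by rw [norm_smul, RCLike.norm_conj]
    _ ≤ gsNorm q (u k) * gsNorm p f := sum_norm_mul_norm_le_gsNorm_mul_gsNorm q p _ _

lemma gsNorm_top_gft_le (p q : ℝ≥0∞) [p.HolderConjugate q] (u : Fin N → Fin N → 𝕂)
    (f : Fin N → X) : gsNorm ∞ (gft u f) ≤ coh q u * gsNorm p f := by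
  refine gsNorm_top_le (fun k => (norm_gft_le p q u f k).trans ?_) ?_
  · gcongr
    · exact gsNorm_nonneg p f
    · exact gsNorm_le_coh q u k
  · exact mul_nonneg (coh_nonneg q u) (gsNorm_nonneg p f)

lemma gft_smul_const (u : Fin N → Fin N → 𝕂) (c : Fin N → 𝕂) (x : X) :
    gft u (fun n => c n • x) = fun k => gft u c k • x := by
  funext k
  simp only [gft, smul_smul, smul_eq_mul, sum_smul]

lemma gsNorm_smul_const {p : ℝ≥0∞} (hp : p ≠ 0) (c : Fin N → 𝕂) (x : X) :
    gsNorm p (fun n => c n • x) = gsNorm p c * ‖x‖ := by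
  rw [mul_comm, ← norm_norm x, ← gsNorm_smul hp]
  exact gsNorm_congr_norm fun n => by simp only [Pi.smul_apply, norm_smul, norm_norm, mul_comm]

lemma coh_conjTranspose (p : ℝ≥0∞) (u : Fin N → Fin N → 𝕂) :
    coh p (Matrix.of u)ᴴ = coh p (fun n k => u k n) := by
  unfold coh
  congr! 2 with n
  exact gsNorm_congr_norm fun k => norm_star _

namespace OrthoBasis

variable {u : Fin N → Fin N → 𝕂}

lemma ne_zero (hU : OrthoBasis u) (k : Fin N) : u k ≠ 0 := fun hk => by
  simpa [hk] using hU k k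

lemma mul_conjTranspose_eq_one (hU : OrthoBasis u) : Matrix.of u * (Matrix.of u)ᴴ = 1 := by
  ext k l
  simpa [Matrix.mul_apply, Matrix.one_apply, eq_comm, mul_comm, RCLike.star_def] using hU l k

lemma gft_conjTranspose_gft (hU : OrthoBasis u) (f : Fin N → X) :
    gft (Matrix.of u)ᴴ (gft u f) = f := by
  funext n
  have hMM : (Matrix.of u)ᴴ * Matrix.of u = 1 := mul_eq_one_comm.mp hU.mul_conjTranspose_eq_one
  have hrows (m : Fin N) : ∑ k, conj (u k m) * u k n = if m = n then 1 else 0 := by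
    simpa [Matrix.mul_apply, Matrix.one_apply, RCLike.star_def] using
      congrFun (congrFun hMM m) n
  simp only [gft, Matrix.conjTranspose_apply, Matrix.of_apply, RCLike.star_def, RCLike.conj_conj,
    smul_sum, smul_smul]
  rw [sum_comm]
  simp_rw [← sum_smul, mul_comm (u _ n), hrows]
  simp

end OrthoBasis

end GFT

theorem gft_norm_p_to_infty_general {𝕂 : Type*} [RCLike 𝕂] {X : Type*} [NormedAddCommGroup X]
    [NormedSpace 𝕂 X] {N : ℕ} (hN : 0 < N)
    (u : Fin N → Fin N → 𝕂) (hU : OrthoBasis u)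
    (p p' : ℝ≥0∞) (hpp' : 1 / p + 1 / p' = 1) :
    (∀ f : Fin N → X, gsNorm ∞ (gft u f) ≤ coh p' u * gsNorm p f) ∧
    (∀ f : Fin N → X, gsNorm ∞ f ≤ coh p' (fun n k => u k n) * gsNorm p (gft u f)) ∧
    (Nontrivial X →
      ∃ f : Fin N → X, f ≠ 0 ∧ gsNorm ∞ (gft u f) = coh p' u * gsNorm p f) := by
  have : p.HolderConjugate p' :=
    ENNReal.holderConjugate_iff.mpr (by simpa only [one_div] using hpp')
  refine ⟨gsNorm_top_gft_le p p' u, fun f => ?_, fun _ => ?_⟩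
  · calc gsNorm ∞ f = gsNorm ∞ (gft (Matrix.of u)ᴴ (gft u f)) := by
          rw [hU.gft_conjTranspose_gft]
      _ ≤ coh p' (Matrix.of u)ᴴ * gsNorm p (gft u f) := gsNorm_top_gft_le p p' _ _
      _ = coh p' (fun n k => u k n) * gsNorm p (gft u f) := by rw [coh_conjTranspose]
  have : NeZero N := ⟨hN.ne'⟩
  obtain ⟨k, hk⟩ := exists_coh_eq p' u
  obtain ⟨x, hx⟩ := exists_ne (0 : X)
  obtain ⟨c, hc, hck⟩ := exists_sum_conj_mul_eq_gsNorm_mul_gsNorm p' p (hU.ne_zero k)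
  refine ⟨fun n => c n • x, fun h => hc (funext fun n => ?_),
    (gsNorm_top_gft_le p p' u _).antisymm ?_⟩
  · exact (smul_eq_zero.mp (congrFun h n)).resolve_right hx
  calc coh p' u * gsNorm p (fun n => c n • x) = ‖gft u c k • x‖ := by
        rw [hk, gsNorm_smul_const (ENNReal.HolderConjugate.ne_zero p p'), norm_smul, gft]
        simp only [smul_eq_mul, hck, RCLike.norm_ofReal]
        rw [abs_of_nonneg (mul_nonneg (gsNorm_nonneg _ _) (gsNorm_nonneg _ _)), mul_assoc]
    _ ≤ gsNorm ∞ (gft u fun n => c n • x) := by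
        rw [gft_smul_const]
        exact norm_le_gsNorm_top (fun k => gft u c k • x) k

/-- operator norm of `𝓕 : L^p → L^∞` equals `κ_{p'}(U)`. -/
theorem gft_norm_p_to_infty {𝕂 : Type*} [RCLike 𝕂] {X : Type*} [NormedAddCommGroup X]
    [NormedSpace 𝕂 X] [CompleteSpace X] {N : ℕ} (hN : 0 < N)
    (u : Fin N → Fin N → 𝕂) (hU : OrthoBasis u)
    (p p' : ℝ≥0∞) (hp : 1 ≤ p) (hpp' : 1 / p + 1 / p' = 1) :
    (∀ f : Fin N → X, gsNorm ∞ (gft u f) ≤ coh p' u * gsNorm p f) ∧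
    (∀ f : Fin N → X, gsNorm ∞ f ≤ coh p' (fun n k => u k n) * gsNorm p (gft u f)) ∧
    (Nontrivial X →
      ∃ f : Fin N → X, f ≠ 0 ∧ gsNorm ∞ (gft u f) = coh p' u * gsNorm p f) :=
  gft_norm_p_to_infty_general hN u hU p p' hpp'
end

section
/- Let N ≥ 2 and let X be a Banach space over 𝕂. Then the following are equivalent: (i) for every orthonormal basis B = {u_1,…,u_N} of 𝕂^N and every signal f : V → X, the graph Fourier transform with respect to B satisfies ‖f̂‖_2 = ‖f‖_2; (ii) the norm of X satisfies the parallelogram law ‖x+y‖² + ‖x−y‖² = 2‖x‖² + 2‖y‖² for all x, y ∈ X (equivalently, the norm of X is induced by an inner product). -/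
open Finset
open scoped ENNReal

/-! Under the parallelogram law the norm of `X` comes from an inner product (Jordan–von Neumann),
and then `∑ ‖f̂ k‖²` expands into `∑ n m, (∑ k, u k n * conj (u k m)) * ⟪f n, f m⟫`, whose inner
coefficient is `δ n m` because the columns of a unitary matrix are orthonormal as well as its rows.
Conversely, the basis `(1, 1) / √2, (1, -1) / √2` of `𝕂²`, extended by the identity to `𝕂^N`,
maps the signal `(x, y, 0, …, 0)` to `((x + y) / √2, (x - y) / √2, 0, …, 0)`, so Plancherel's
equality for it is the parallelogram law. -/

section

open Finset

variable {𝕂 : Type*} [RCLike 𝕂]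

theorem gsNorm_two_eq_sqrt {E : Type*} [NormedAddCommGroup E] {N : ℕ} (f : Fin N → E) :
    gsNorm 2 f = √(∑ n, ‖f n‖ ^ 2) := by
  simp [gsNorm, Real.sqrt_eq_rpow]

theorem gsNorm_two_eq_gsNorm_two_iff {E F : Type*} [NormedAddCommGroup E] [NormedAddCommGroup F]
    {N : ℕ} (f : Fin N → E) (g : Fin N → F) :
    gsNorm 2 f = gsNorm 2 g ↔ ∑ n, ‖f n‖ ^ 2 = ∑ n, ‖g n‖ ^ 2 := by
  rw [gsNorm_two_eq_sqrt, gsNorm_two_eq_sqrt, Real.sqrt_inj (by positivity) (by positivity)]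

theorem OrthoBasis.sum_mul_conj {N : ℕ} {u : Fin N → Fin N → 𝕂} (hu : OrthoBasis u)
    (n m : Fin N) : ∑ k, u k n * (starRingEnd 𝕂) (u k m) = if n = m then 1 else 0 := by
  let U : Matrix (Fin N) (Fin N) 𝕂 := Matrix.of fun n k => u k n
  have hU : star U * U = 1 := by
    ext k l
    simpa [U, Matrix.mul_apply, Matrix.one_apply] using hu k l
  have hU' : U * star U = 1 := mul_eq_one_comm.mp hU
  simpa [U, Matrix.mul_apply, Matrix.one_apply] using congrFun₂ hU' n m

def extendBasis {m : ℕ} (u : Fin m → Fin m → 𝕂) (M : ℕ) : Fin (m + M) → Fin (m + M) → 𝕂 :=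
  Fin.append (fun k => Fin.append (u k) 0) (fun j => Fin.append 0 (Pi.single j 1))

theorem OrthoBasis.extendBasis {m M : ℕ} {u : Fin m → Fin m → 𝕂} (hu : OrthoBasis u) :
    OrthoBasis (extendBasis u M) := by
  have castAdd_ne_natAdd (k : Fin m) (j : Fin M) : Fin.castAdd M k ≠ Fin.natAdd m j := by
    rw [Ne, Fin.ext_iff, Fin.val_castAdd, Fin.val_natAdd]
    omega
  intro k l
  induction k using Fin.addCases with
  | left k =>
    induction l using Fin.addCases with
    | left l => simp [_root_.extendBasis, Fin.sum_univ_add, hu k l]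
    | right j => simp [_root_.extendBasis, Fin.sum_univ_add, castAdd_ne_natAdd]
  | right i =>
    induction l using Fin.addCases with
    | left l => simp [_root_.extendBasis, Fin.sum_univ_add, (castAdd_ne_natAdd l i).symm]
    | right j => simp [_root_.extendBasis, Fin.sum_univ_add, Pi.single_apply, eq_comm]

variable (𝕂) in
noncomputable def hadamard : Fin 2 → Fin 2 → 𝕂 :=
  let c : 𝕂 := ((√2 : ℝ) : 𝕂)⁻¹
  ![![c, c], ![c, -c]]

theorem inv_sqrt_two_mul_self : ((√2 : ℝ) : 𝕂)⁻¹ * ((√2 : ℝ) : 𝕂)⁻¹ = 2⁻¹ := by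
  rw [← mul_inv, ← RCLike.ofReal_mul, Real.mul_self_sqrt zero_le_two, RCLike.ofReal_ofNat]

variable (𝕂) in
theorem orthoBasis_hadamard : OrthoBasis (hadamard 𝕂) := by
  intro k l
  fin_cases k <;> fin_cases l <;> norm_num [hadamard, Fin.sum_univ_two, inv_sqrt_two_mul_self]

variable {X : Type*} [NormedAddCommGroup X]

theorem OrthoBasis.sum_norm_sq_gft [InnerProductSpace 𝕂 X] {N : ℕ} {u : Fin N → Fin N → 𝕂}
    (hu : OrthoBasis u) (f : Fin N → X) : ∑ k, ‖gft u f k‖ ^ 2 = ∑ n, ‖f n‖ ^ 2 := by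
  have inner_gft : ∀ k, inner 𝕂 (gft u f k) (gft u f k)
      = ∑ m, ∑ n, u k n * (starRingEnd 𝕂) (u k m) * inner 𝕂 (f n) (f m) := fun k => by
    simp only [gft, sum_inner, inner_sum, inner_smul_left, inner_smul_right, RCLike.conj_conj,
      mul_sum]
    exact sum_congr rfl fun m _ => sum_congr rfl fun n _ => by ring
  apply RCLike.ofReal_injective (K := 𝕂)
  push_cast
  simp only [← inner_self_eq_norm_sq_to_K, inner_gft]
  rw [sum_comm]
  refine sum_congr rfl fun m _ => ?_
  rw [sum_comm]
  simp [← sum_mul, hu.sum_mul_conj]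

variable [NormedSpace 𝕂 X]

theorem gft_extendBasis_castAdd {m M : ℕ} (u : Fin m → Fin m → 𝕂) (f : Fin m → X) (k : Fin m) :
    gft (extendBasis u M) (Fin.append f 0) (Fin.castAdd M k) = gft u f k := by
  simp [gft, extendBasis, Fin.sum_univ_add]

theorem gft_extendBasis_natAdd {m M : ℕ} (u : Fin m → Fin m → 𝕂) (f : Fin m → X) (j : Fin M) :
    gft (extendBasis u M) (Fin.append f 0) (Fin.natAdd m j) = 0 := by
  simp [gft, extendBasis, Fin.sum_univ_add]

theorem norm_inv_sqrt_two_smul_sq (x : X) : ‖((√2 : ℝ) : 𝕂)⁻¹ • x‖ ^ 2 = ‖x‖ ^ 2 / 2 := by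
  rw [norm_smul, norm_inv, RCLike.norm_ofReal, abs_of_nonneg (by positivity), mul_pow, inv_pow,
    Real.sq_sqrt zero_le_two, inv_mul_eq_div]

theorem gft_hadamard (x y : X) :
    gft (hadamard 𝕂) ![x, y] = ![((√2 : ℝ) : 𝕂)⁻¹ • (x + y), ((√2 : ℝ) : 𝕂)⁻¹ • (x - y)] := by
  ext k
  fin_cases k <;> simp [gft, hadamard, Fin.sum_univ_two, smul_add, sub_eq_add_neg]

theorem sum_norm_sq_gft_hadamard (x y : X) :
    ∑ k, ‖gft (hadamard 𝕂) ![x, y] k‖ ^ 2 = (‖x + y‖ ^ 2 + ‖x - y‖ ^ 2) / 2 := by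
  rw [gft_hadamard, Fin.sum_univ_two, Matrix.cons_val_zero, Matrix.cons_val_one,
    Matrix.cons_val_zero, norm_inv_sqrt_two_smul_sq, norm_inv_sqrt_two_smul_sq, add_div]

variable (𝕂 X) in
def HasPlancherel (N : ℕ) : Prop :=
  ∀ u : Fin N → Fin N → 𝕂, OrthoBasis u → ∀ f : Fin N → X, ∑ k, ‖gft u f k‖ ^ 2 = ∑ n, ‖f n‖ ^ 2

theorem HasPlancherel.of_add {m M : ℕ} (h : HasPlancherel 𝕂 X (m + M)) : HasPlancherel 𝕂 X m := by
  intro u hu f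
  simpa [Fin.sum_univ_add, gft_extendBasis_castAdd, gft_extendBasis_natAdd] using
    h _ hu.extendBasis (Fin.append f 0)

theorem HasPlancherel.parallelogram (h : HasPlancherel 𝕂 X 2) (x y : X) :
    ‖x + y‖ ^ 2 + ‖x - y‖ ^ 2 = 2 * ‖x‖ ^ 2 + 2 * ‖y‖ ^ 2 := by
  have := h _ (orthoBasis_hadamard 𝕂) ![x, y]
  rw [sum_norm_sq_gft_hadamard, Fin.sum_univ_two] at this
  simp only [Matrix.cons_val_zero, Matrix.cons_val_one] at this
  linarith

end

theorem gft_plancherel_iff_parallelogram_general {𝕂 : Type*} [RCLike 𝕂] {X : Type*}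
    [NormedAddCommGroup X] [NormedSpace 𝕂 X] {N : ℕ} (hN : 2 ≤ N) :
    ((∀ u : Fin N → Fin N → 𝕂, OrthoBasis u →
        ∀ f : Fin N → X, gsNorm 2 (gft u f) = gsNorm 2 f) ↔
      (∀ x y : X, ‖x + y‖ ^ 2 + ‖x - y‖ ^ 2 = 2 * ‖x‖ ^ 2 + 2 * ‖y‖ ^ 2)) := by
  constructor
  · intro h
    obtain ⟨M, rfl⟩ := Nat.exists_eq_add_of_le hN
    refine HasPlancherel.parallelogram (HasPlancherel.of_add (𝕂 := 𝕂) (M := M) fun u hu f => ?_)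
    exact (gsNorm_two_eq_gsNorm_two_iff _ _).1 (h u hu f)
  · intro h u hu f
    let _ : InnerProductSpace 𝕂 X := .ofNorm 𝕂 fun x y => by linear_combination h x y
    exact (gsNorm_two_eq_gsNorm_two_iff _ _).2 (hu.sum_norm_sq_gft f)

/-- for `N ≥ 2`, Plancherel's equality holds for every orthonormal basis and
every signal iff the norm of `X` satisfies the parallelogram law. -/
theorem gft_plancherel_iff_parallelogram {𝕂 : Type*} [RCLike 𝕂] {X : Type*}
    [NormedAddCommGroup X] [NormedSpace 𝕂 X] [CompleteSpace X] {N : ℕ} (hN : 2 ≤ N) :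
    ((∀ u : Fin N → Fin N → 𝕂, OrthoBasis u →
        ∀ f : Fin N → X, gsNorm 2 (gft u f) = gsNorm 2 f) ↔
      (∀ x y : X, ‖x + y‖ ^ 2 + ‖x - y‖ ^ 2 = 2 * ‖x‖ ^ 2 + 2 * ‖y‖ ^ 2)) :=
  gft_plancherel_iff_parallelogram_general hN
end

section
/- For all scalar signals α, β : V → 𝕂 and every signal f : V → X, the graph convolution satisfies: (i) the convolution theorem 𝓕(α*f)(k) = α̂(k) • f̂(k) for all k ∈ V; (ii) commutativity of scalar convolution α*β = β*α; (iii) associativity (α*β)*f = α*(β*f). -/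
/-! The convolution `α * f` is the synthesis `n ↦ ∑ k, u k n • c k` of the spectral product
`c = α̂ • f̂`, and orthonormality of the columns makes the Fourier transform a left inverse of
synthesis. This gives the convolution theorem, from which commutativity and associativity follow
pointwise on the spectral side. -/

open Finset
open scoped ENNReal

section

variable {𝕂 : Type*} [RCLike 𝕂] {X : Type*} [NormedAddCommGroup X] [NormedSpace 𝕂 X] {N : ℕ}
  {u : Fin N → Fin N → 𝕂}

theorem OrthoBasis.gft_synthesis (hU : OrthoBasis u) (c : Fin N → X) :
    gft u (fun n => ∑ l, u l n • c l) = c := by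
  funext k
  calc ∑ n, (starRingEnd 𝕂) (u k n) • ∑ l, u l n • c l
      = ∑ l, (∑ n, (starRingEnd 𝕂) (u k n) * u l n) • c l := by
        simp only [smul_sum, sum_smul, smul_smul]
        exact sum_comm
    _ = c k := by simp [hU k]

theorem OrthoBasis.gft_gconv (hU : OrthoBasis u) (α : Fin N → 𝕂) (f : Fin N → X) :
    gft u (gconv u α f) = gft u α • gft u f :=
  hU.gft_synthesis _

theorem gconv_comm (u : Fin N → Fin N → 𝕂) (α β : Fin N → 𝕂) :
    gconv u α β = gconv u β α := by
  funext n
  simp only [gconv, smul_eq_mul, mul_comm (gft u α _)]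

theorem OrthoBasis.gconv_assoc (hU : OrthoBasis u) (α β : Fin N → 𝕂) (f : Fin N → X) :
    gconv u (gconv u α β) f = gconv u α (gconv u β f) := by
  funext n
  simp only [gconv, hU.gft_gconv, Pi.smul_apply', smul_eq_mul, mul_smul]

end

theorem gconv_basic_properties_general {𝕂 : Type*} [RCLike 𝕂] {X : Type*} [NormedAddCommGroup X]
    [NormedSpace 𝕂 X] {N : ℕ}
    (u : Fin N → Fin N → 𝕂) (hU : OrthoBasis u) :
    (∀ (α : Fin N → 𝕂) (f : Fin N → X) (k : Fin N),
      gft u (gconv u α f) k = gft u α k • gft u f k) ∧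
    (∀ α β : Fin N → 𝕂, gconv u α β = gconv u β α) ∧
    (∀ (α β : Fin N → 𝕂) (f : Fin N → X),
      gconv u (gconv u α β) f = gconv u α (gconv u β f)) :=
  ⟨fun α f k => congrFun (hU.gft_gconv α f) k, gconv_comm u, hU.gconv_assoc⟩

/-- convolution theorem, commutativity of scalar convolution, and
associativity of convolution. -/
theorem gconv_basic_properties {𝕂 : Type*} [RCLike 𝕂] {X : Type*} [NormedAddCommGroup X]
    [NormedSpace 𝕂 X] [CompleteSpace X] {N : ℕ} (hN : 0 < N)
    (u : Fin N → Fin N → 𝕂) (hU : OrthoBasis u) :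
    (∀ (α : Fin N → 𝕂) (f : Fin N → X) (k : Fin N),
      gft u (gconv u α f) k = gft u α k • gft u f k) ∧
    (∀ α β : Fin N → 𝕂, gconv u α β = gconv u β α) ∧
    (∀ (α β : Fin N → 𝕂) (f : Fin N → X),
      gconv u (gconv u α β) f = gconv u α (gconv u β f)) :=
  gconv_basic_properties_general u hU
end

section
/- Fix m ∈ V and suppose X is nontrivial. Then the graph translation operator T_m : X^V → X^V is bijective if and only if u_k(m) ≠ 0 for all k ∈ {1,…,N}; moreover in this case its inverse is the linear operator g ↦ T_m^{-1}g given by T_m^{-1}g(n) = ∑_{k=1}^N (u_k(n)/conj(u_k(m))) • ĝ(k). Furthermore, T_m is injective if and only if T_m is surjective. -/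
open Finset
open scoped ENNReal

/-!
Every operator of the form `f ↦ ∑ k, (u k · * c k) • f̂ k` is diagonal in the graph Fourier
basis: it multiplies `f̂ k` by `c k`, and `T_m` is the case `c k = conj (u k m)`. Composing two
such multipliers multiplies their symbols, and the symbol `1` gives the identity by Fourier
inversion, so a symbol with no zero is inverted by its pointwise inverse. If `c k₀ = 0`, the
signal `n ↦ u k₀ n • x` with `x ≠ 0` has Fourier transform `x` at `k₀` and `0` elsewhere; it
lies in the kernel, and it is not in the range since every output has Fourier coefficient `0`
at `k₀`. Hence injectivity, surjectivity and `∀ k, c k ≠ 0` are all equivalent.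
-/

open Finset Function
open scoped Matrix

noncomputable def graphMultiplier {𝕂 : Type*} [RCLike 𝕂] {X : Type*} [NormedAddCommGroup X]
    [NormedSpace 𝕂 X] {N : ℕ} (u : Fin N → Fin N → 𝕂) (c : Fin N → 𝕂)
    (f : Fin N → X) : Fin N → X :=
  fun n => ∑ k, (u k n * c k) • gft u f k

namespace OrthoBasis

variable {𝕂 : Type*} [RCLike 𝕂] {X : Type*} [NormedAddCommGroup X] [NormedSpace 𝕂 X]
  {N : ℕ} {u : Fin N → Fin N → 𝕂}

/-- A one-sided inverse of a square matrix is two-sided, so `M Mᴴ = 1` gives `Mᴴ M = 1`. -/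
theorem sum_mul_conj_s17 (hU : OrthoBasis u) (n n' : Fin N) :
    ∑ k, u k n * starRingEnd 𝕂 (u k n') = if n = n' then 1 else 0 := by
  set M : Matrix (Fin N) (Fin N) 𝕂 := Matrix.of u
  have hrows : M * Mᴴ = 1 := by
    ext k l
    simp only [M, Matrix.mul_apply, Matrix.conjTranspose_apply, Matrix.of_apply,
      Matrix.one_apply, ← starRingEnd_apply, mul_comm (u k _), hU l k, eq_comm]
  have hcols : (Mᴴ * M) n' n = (1 : Matrix (Fin N) (Fin N) 𝕂) n' n := by
    rw [mul_eq_one_comm.mp hrows]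
  simpa only [M, Matrix.mul_apply, Matrix.conjTranspose_apply, Matrix.of_apply,
    Matrix.one_apply, ← starRingEnd_apply, mul_comm _ (u _ n), eq_comm] using hcols

theorem sum_smul_gft (hU : OrthoBasis u) (f : Fin N → X) (n : Fin N) :
    ∑ k, u k n • gft u f k = f n := by
  simp only [gft, smul_sum, smul_smul]
  rw [sum_comm]
  simp only [← sum_smul, hU.sum_mul_conj_s17, ite_smul, one_smul, zero_smul, sum_ite_eq,
    mem_univ, if_true]

theorem gft_graphMultiplier (hU : OrthoBasis u) (c : Fin N → 𝕂) (f : Fin N → X) (l : Fin N) :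
    gft u (graphMultiplier u c f) l = c l • gft u f l := by
  change ∑ n, starRingEnd 𝕂 (u l n) • ∑ k, (u k n * c k) • gft u f k = _
  simp only [smul_sum, smul_smul]
  rw [sum_comm]
  simp only [← sum_smul, ← mul_assoc, ← sum_mul, hU l, ite_mul, one_mul, zero_mul, ite_smul,
    zero_smul, sum_ite_eq, mem_univ, if_true]

theorem graphMultiplier_one (hU : OrthoBasis u) (f : Fin N → X) :
    graphMultiplier u 1 f = f := by
  funext n
  simpa only [graphMultiplier, Pi.one_apply, mul_one] using hU.sum_smul_gft f n

theorem graphMultiplier_graphMultiplier (hU : OrthoBasis u) (c d : Fin N → 𝕂)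
    (f : Fin N → X) :
    graphMultiplier u c (graphMultiplier u d f) = graphMultiplier u (c * d) f := by
  funext n
  simp only [graphMultiplier, hU.gft_graphMultiplier, smul_smul, Pi.mul_apply, mul_assoc]

theorem leftInverse_graphMultiplier_inv (hU : OrthoBasis u) {c : Fin N → 𝕂}
    (hc : ∀ k, c k ≠ 0) :
    LeftInverse (graphMultiplier (X := X) u c⁻¹) (graphMultiplier u c) := fun f => by
  have hcc : c⁻¹ * c = 1 := funext fun k => inv_mul_cancel₀ (hc k)
  rw [hU.graphMultiplier_graphMultiplier, hcc, hU.graphMultiplier_one]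

theorem rightInverse_graphMultiplier_inv (hU : OrthoBasis u) {c : Fin N → 𝕂}
    (hc : ∀ k, c k ≠ 0) :
    RightInverse (graphMultiplier (X := X) u c⁻¹) (graphMultiplier u c) := fun f => by
  have hcc : c * c⁻¹ = 1 := funext fun k => mul_inv_cancel₀ (hc k)
  rw [hU.graphMultiplier_graphMultiplier, hcc, hU.graphMultiplier_one]

theorem gft_smul_row (hU : OrthoBasis u) (k₀ : Fin N) (x : X) (k : Fin N) :
    gft u (fun n => u k₀ n • x) k = if k = k₀ then x else 0 := by
  simp only [gft, smul_smul, ← sum_smul, hU k k₀, ite_smul, one_smul, zero_smul]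

theorem graphMultiplier_smul_row (hU : OrthoBasis u) {c : Fin N → 𝕂} {k₀ : Fin N}
    (hc : c k₀ = 0) (x : X) :
    graphMultiplier u c (fun n => u k₀ n • x) = 0 := by
  funext n
  simp [graphMultiplier, hU.gft_smul_row, hc]

theorem not_injective_graphMultiplier [Nontrivial X] (hU : OrthoBasis u) {c : Fin N → 𝕂}
    {k₀ : Fin N} (hc : c k₀ = 0) : ¬Injective (graphMultiplier (X := X) u c) := by
  obtain ⟨x, hx⟩ := exists_ne (0 : X)
  intro hinj
  have hrow : (fun n => u k₀ n • x) = fun n => u k₀ n • (0 : X) :=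
    hinj <| (hU.graphMultiplier_smul_row hc x).trans (hU.graphMultiplier_smul_row hc 0).symm
  have := congrArg (fun f => gft u f k₀) hrow
  simp only [hU.gft_smul_row, if_true] at this
  exact hx this

theorem not_surjective_graphMultiplier [Nontrivial X] (hU : OrthoBasis u) {c : Fin N → 𝕂}
    {k₀ : Fin N} (hc : c k₀ = 0) : ¬Surjective (graphMultiplier (X := X) u c) := by
  obtain ⟨x, hx⟩ := exists_ne (0 : X)
  intro hsurj
  obtain ⟨f, hf⟩ := hsurj fun n => u k₀ n • x
  have := hU.gft_graphMultiplier c f k₀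
  rw [hf, hU.gft_smul_row, if_pos rfl, hc, zero_smul] at this
  exact hx this

theorem injective_graphMultiplier_iff [Nontrivial X] (hU : OrthoBasis u) (c : Fin N → 𝕂) :
    Injective (graphMultiplier (X := X) u c) ↔ ∀ k, c k ≠ 0 :=
  ⟨fun h _ hk => hU.not_injective_graphMultiplier hk h,
    fun hc => (hU.leftInverse_graphMultiplier_inv hc).injective⟩

theorem surjective_graphMultiplier_iff [Nontrivial X] (hU : OrthoBasis u) (c : Fin N → 𝕂) :
    Surjective (graphMultiplier (X := X) u c) ↔ ∀ k, c k ≠ 0 :=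
  ⟨fun h _ hk => hU.not_surjective_graphMultiplier hk h,
    fun hc => (hU.rightInverse_graphMultiplier_inv hc).surjective⟩

end OrthoBasis

theorem gtrans_invertibility_general {𝕂 : Type*} [RCLike 𝕂] {X : Type*} [NormedAddCommGroup X]
    [NormedSpace 𝕂 X] [Nontrivial X] {N : ℕ}
    (u : Fin N → Fin N → 𝕂) (hU : OrthoBasis u) (m : Fin N) :
    (Function.Bijective (gtrans (X := X) u m) ↔ ∀ k, u k m ≠ 0) ∧
    ((∀ k, u k m ≠ 0) →
      (∀ g : Fin N → X,
        gtrans u m (fun n => ∑ k, (u k n / (starRingEnd 𝕂) (u k m)) • gft u g k) = g) ∧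
      (∀ f : Fin N → X,
        (fun n => ∑ k, (u k n / (starRingEnd 𝕂) (u k m)) • gft u (gtrans u m f) k) = f)) ∧
    (Function.Injective (gtrans (X := X) u m) ↔
      Function.Surjective (gtrans (X := X) u m)) := by
  set c : Fin N → 𝕂 := fun k => starRingEnd 𝕂 (u k m)
  have hT : gtrans (X := X) u m = graphMultiplier u c := rfl
  have hinv (g : Fin N → X) :
      (fun n => ∑ k, (u k n / starRingEnd 𝕂 (u k m)) • gft u g k) = graphMultiplier u c⁻¹ g := by
    simp only [div_eq_mul_inv]
    rfl
  have hc : (∀ k, c k ≠ 0) ↔ ∀ k, u k m ≠ 0 := by simp only [c, map_ne_zero]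
  rw [hT, Bijective, hU.injective_graphMultiplier_iff, hU.surjective_graphMultiplier_iff, hc]
  refine ⟨and_self_iff, fun h => ⟨fun g => ?_, fun f => ?_⟩, Iff.rfl⟩
  · rw [hinv]; exact hU.rightInverse_graphMultiplier_inv (hc.mpr h) g
  · rw [hinv]; exact hU.leftInverse_graphMultiplier_inv (hc.mpr h) f

/-- `T_m` is bijective iff `u k m ≠ 0` for all `k`; in that case the map
`g ↦ (n ↦ ∑ k, (u k n / conj (u k m)) • ĝ k)` is its inverse; moreover `T_m` is
injective iff it is surjective. -/
theorem gtrans_invertibility {𝕂 : Type*} [RCLike 𝕂] {X : Type*} [NormedAddCommGroup X]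
    [NormedSpace 𝕂 X] [CompleteSpace X] [Nontrivial X] {N : ℕ} (hN : 0 < N)
    (u : Fin N → Fin N → 𝕂) (hU : OrthoBasis u) (m : Fin N) :
    (Function.Bijective (gtrans (X := X) u m) ↔ ∀ k, u k m ≠ 0) ∧
    ((∀ k, u k m ≠ 0) →
      (∀ g : Fin N → X,
        gtrans u m (fun n => ∑ k, (u k n / (starRingEnd 𝕂) (u k m)) • gft u g k) = g) ∧
      (∀ f : Fin N → X,
        (fun n => ∑ k, (u k n / (starRingEnd 𝕂) (u k m)) • gft u (gtrans u m f) k) = f)) ∧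
    (Function.Injective (gtrans (X := X) u m) ↔
      Function.Surjective (gtrans (X := X) u m)) :=
  gtrans_invertibility_general u hU m
end

section
/- Suppose X is a Hilbert space over 𝕂 and fix m ∈ V. Define the linear operator T_m^* on signals by T_m^*g(n) = ∑_{k=1}^N u_k(n)·u_k(m) • ĝ(k). Then T_m^* is the adjoint of the graph translation operator T_m with respect to the inner product ⟨f,g⟩ = ∑_{n=1}^N ⟨f(n),g(n)⟩, i.e., ⟨T_m f, g⟩ = ⟨f, T_m^* g⟩ for all signals f, g. Moreover, if X is nontrivial, T_m is self-adjoint if and only if u_k(m) ∈ ℝ for all k ∈ {1,…,N}. -/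
open Finset
open scoped ENNReal

/-!
Write `U` for the matrix whose columns are the `u k`. An operator of the form
`f ↦ (n ↦ ∑ k, (u k n * d k) • f̂ k)` acts on signals through the scalar matrix `U * diag d * Uᴴ`,
and under the signal inner product a scalar matrix `A` has adjoint `Aᴴ`. So `T_m`, the multiplier
with `d k = conj (u k m)`, has as adjoint the multiplier with `d k = u k m`. When `X` is nontrivial,
testing against signals supported at a single vertex shows that `T_m` is self-adjoint iff
`U * diag d * Uᴴ` is Hermitian. Since `Uᴴ * U = 1`, that holds iff `diag d` is Hermitian, that is,
iff every `u k m` is real.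
-/

theorem sum_inner_single_left {ι 𝕂 X : Type*} [Fintype ι] [DecidableEq ι] [RCLike 𝕂]
    [NormedAddCommGroup X] [InnerProductSpace 𝕂 X] (i : ι) (y : X) (g : ι → X) :
    ∑ k, inner 𝕂 ((Pi.single i y : ι → X) k) (g k) = inner 𝕂 y (g i) := by
  rw [Fintype.sum_eq_single i fun k hk => by simp [hk]]
  simp

namespace Matrix

variable {ι κ μ R M : Type*} [Fintype κ]

def smulVec [Semiring R] [AddCommMonoid M] [Module R M] (A : Matrix ι κ R) (f : κ → M) :
    ι → M :=
  fun i => ∑ j, A i j • f j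

theorem smulVec_mul [Fintype μ] [Semiring R] [AddCommMonoid M] [Module R M]
    (A : Matrix ι κ R) (B : Matrix κ μ R) (f : μ → M) :
    (A * B).smulVec f = A.smulVec (B.smulVec f) := by
  ext i
  simp only [smulVec, mul_apply, sum_smul, smul_sum, smul_smul]
  exact Finset.sum_comm

theorem smulVec_single [DecidableEq κ] [Semiring R] [AddCommMonoid M] [Module R M]
    (A : Matrix ι κ R) (j : κ) (x : M) (i : ι) :
    A.smulVec (Pi.single j x) i = A i j • x := by
  simp [smulVec, Pi.single_apply]

theorem isHermitian_mul_diagonal_mul_conjTranspose_iff [Fintype ι] [DecidableEq ι] [Semiring R]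
    [StarRing R] {U : Matrix ι ι R} (hU : Uᴴ * U = 1) {d : ι → R} :
    (U * diagonal d * Uᴴ).IsHermitian ↔ ∀ i, IsSelfAdjoint (d i) := by
  refine ⟨fun h => ?_,
    fun h => isHermitian_mul_mul_conjTranspose U (isHermitian_diagonal_iff.mpr h)⟩
  have hD : Uᴴ * (U * diagonal d * Uᴴ) * U = diagonal d := by
    simp only [Matrix.mul_assoc, hU, Matrix.mul_one, ← Matrix.mul_assoc Uᴴ, Matrix.one_mul]
  exact isHermitian_diagonal_iff.mp (hD ▸ isHermitian_conjTranspose_mul_mul U h)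

variable {𝕂 X : Type*} [RCLike 𝕂] [NormedAddCommGroup X] [InnerProductSpace 𝕂 X]

theorem sum_inner_smulVec [Fintype ι] (A : Matrix ι κ 𝕂) (f : κ → X) (g : ι → X) :
    ∑ i, inner 𝕂 (A.smulVec f i) (g i) = ∑ j, inner 𝕂 (f j) (Aᴴ.smulVec g j) := by
  simp only [smulVec, sum_inner, inner_sum, inner_smul_left, inner_smul_right,
    conjTranspose_apply, RCLike.star_def]
  exact Finset.sum_comm

theorem smulVec_symmetric_iff_isHermitian [Fintype ι] [DecidableEq ι] [Nontrivial X]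
    (A : Matrix ι ι 𝕂) :
    (∀ f g : ι → X, ∑ i, inner 𝕂 (A.smulVec f i) (g i) = ∑ i, inner 𝕂 (f i) (A.smulVec g i)) ↔
      A.IsHermitian := by
  refine ⟨fun h => ?_, fun hA f g => by rw [sum_inner_smulVec, hA.eq]⟩
  obtain ⟨x, hx⟩ := exists_ne (0 : X)
  have hcol : ∀ i j, Aᴴ.smulVec (Pi.single j x) i = A.smulVec (Pi.single j x) i := by
    intro i j
    refine ext_inner_left 𝕂 fun y => ?_
    have := h (Pi.single i y) (Pi.single j x)
    rw [sum_inner_smulVec] at this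
    simpa only [sum_inner_single_left] using this
  ext i j
  simpa [smulVec_single, smul_left_injective 𝕂 hx |>.eq_iff] using hcol i j

end Matrix

open Matrix

section

variable {𝕂 X : Type*} [RCLike 𝕂] [NormedAddCommGroup X] {N : ℕ}

def basisMatrix (u : Fin N → Fin N → 𝕂) : Matrix (Fin N) (Fin N) 𝕂 :=
  Matrix.of fun n k => u k n

theorem OrthoBasis.conjTranspose_mul_self {u : Fin N → Fin N → 𝕂} (hU : OrthoBasis u) :
    (basisMatrix u)ᴴ * basisMatrix u = 1 := by
  ext k l
  simpa [basisMatrix, mul_apply, one_apply] using hU k l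

noncomputable def fourierMultiplier [NormedSpace 𝕂 X] (u : Fin N → Fin N → 𝕂) (d : Fin N → 𝕂)
    (f : Fin N → X) : Fin N → X :=
  fun n => ∑ k, (u k n * d k) • gft u f k

theorem fourierMultiplier_eq_smulVec [NormedSpace 𝕂 X] (u : Fin N → Fin N → 𝕂) (d : Fin N → 𝕂)
    (f : Fin N → X) :
    fourierMultiplier u d f = (basisMatrix u * diagonal d * (basisMatrix u)ᴴ).smulVec f := by
  ext n
  rw [smulVec_mul]
  simp [fourierMultiplier, gft, smulVec, basisMatrix, mul_diagonal]

theorem sum_inner_fourierMultiplier [InnerProductSpace 𝕂 X] (u : Fin N → Fin N → 𝕂)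
    (d : Fin N → 𝕂) (f g : Fin N → X) :
    ∑ n, inner 𝕂 (fourierMultiplier u d f n) (g n) =
      ∑ n, inner 𝕂 (f n) (fourierMultiplier u (star d) g n) := by
  rw [fourierMultiplier_eq_smulVec, fourierMultiplier_eq_smulVec, sum_inner_smulVec]
  simp only [conjTranspose_mul, conjTranspose_conjTranspose, diagonal_conjTranspose,
    Matrix.mul_assoc]

end

theorem gtrans_adjoint_general {𝕂 : Type*} [RCLike 𝕂] {X : Type*} [NormedAddCommGroup X]
    [InnerProductSpace 𝕂 X] {N : ℕ}
    (u : Fin N → Fin N → 𝕂) (hU : OrthoBasis u) (m : Fin N) :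
    (∀ f g : Fin N → X,
      (∑ n, (inner 𝕂 (gtrans u m f n) (g n) : 𝕂)) =
        ∑ n, (inner 𝕂 (f n) (∑ k, (u k n * u k m) • gft u g k) : 𝕂)) ∧
    (Nontrivial X →
      ((∀ f g : Fin N → X,
          (∑ n, (inner 𝕂 (gtrans u m f n) (g n) : 𝕂)) =
            ∑ n, (inner 𝕂 (f n) (gtrans u m g n) : 𝕂)) ↔
        ∀ k, (starRingEnd 𝕂) (u k m) = u k m)) := by
  have hT : gtrans u m = fourierMultiplier (X := X) u (fun k => starRingEnd 𝕂 (u k m)) := rfl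
  refine ⟨fun f g => ?_, fun _ => ?_⟩
  · rw [hT, sum_inner_fourierMultiplier]
    simp [fourierMultiplier]
  · rw [hT, funext (fourierMultiplier_eq_smulVec u _), smulVec_symmetric_iff_isHermitian,
      isHermitian_mul_diagonal_mul_conjTranspose_iff hU.conjTranspose_mul_self]
    simp [isSelfAdjoint_iff, eq_comm]

/-- the adjoint of the graph translation operator `T_m` on a Hilbert
space is `g ↦ (n ↦ ∑ k, (u k n * u k m) • ĝ k)`, and for nontrivial `X`, `T_m` is
self-adjoint iff all entries `u k m` are real. -/
theorem gtrans_adjoint {𝕂 : Type*} [RCLike 𝕂] {X : Type*} [NormedAddCommGroup X]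
    [InnerProductSpace 𝕂 X] [CompleteSpace X] {N : ℕ} (hN : 0 < N)
    (u : Fin N → Fin N → 𝕂) (hU : OrthoBasis u) (m : Fin N) :
    (∀ f g : Fin N → X,
      (∑ n, (inner 𝕂 (gtrans u m f n) (g n) : 𝕂)) =
        ∑ n, (inner 𝕂 (f n) (∑ k, (u k n * u k m) • gft u g k) : 𝕂)) ∧
    (Nontrivial X →
      ((∀ f g : Fin N → X,
          (∑ n, (inner 𝕂 (gtrans u m f n) (g n) : 𝕂)) =
            ∑ n, (inner 𝕂 (f n) (gtrans u m g n) : 𝕂)) ↔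
        ∀ k, (starRingEnd 𝕂) (u k m) = u k m)) :=
  gtrans_adjoint_general u hU m
end
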